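/- (Exponential LDQ-Res lower bound for ts-LQParity) There exist constants c > 0 and ε > 0 such that for all N ≥ 2, every LDQ-Res (that is, LDQ(D^trv)-Res) refutation of ts-LQParity(N) has size at least c·2^(N^ε). -/

import Mathlib

/-! ## Literals, clauses, DQBFs -/

structure Lit (V : Type) where
  var : V
  pos : Bool
deriving DecidableEq

def Lit.negate {V : Type} (l : Lit V) : Lit V := ⟨l.var, !l.pos⟩

abbrev Clause (V : Type) [DecidableEq V] : Type := Finset (Lit V)

/-- An S-form DQBF: universal variables `U`, existential variables `E`,
dependency sets `dep` (only meaningful on `E`), and a CNF matrix. -/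
structure DQBF (V : Type) [DecidableEq V] where
  U : Finset V
  E : Finset V
  dep : V → Finset V
  matrix : Finset (Clause V)

variable {V : Type} [DecidableEq V]

/-- Well-formedness of a DQBF. -/
def DQBF.WF (ψ : DQBF V) : Prop :=
  Disjoint ψ.U ψ.E ∧ (∀ x ∈ ψ.E, ψ.dep x ⊆ ψ.U) ∧
    ∀ C ∈ ψ.matrix, ∀ l ∈ C, l.var ∈ ψ.U ∪ ψ.E

/-- Dependency set with the convention `D_u = {u}` for universal variables. -/
def DQBF.depOf (ψ : DQBF V) (y : V) : Finset V := if y ∈ ψ.U then {y} else ψ.dep y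

/-! ## Semantics -/

def Clause.Sat (β : V → Bool) (C : Clause V) : Prop := ∃ l ∈ C, β l.var = l.pos

/-- A Skolem function set respects the dependency sets if the value of each
existential variable only depends on the assignment to its dependency set. -/
def DQBF.Respects (ψ : DQBF V) (f : V → (V → Bool) → Bool) : Prop :=
  ∀ x ∈ ψ.E, ∀ β γ : V → Bool, (∀ u ∈ ψ.dep x, β u = γ u) → f x β = f x γ

/-- The completed assignment `β ∪ f(β)`. -/
def DQBF.Completed (ψ : DQBF V) (f : V → (V → Bool) → Bool) (β : V → Bool) : V → Bool :=
  fun v => if v ∈ ψ.E then f v β else β v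

def DQBF.IsModel (ψ : DQBF V) (f : V → (V → Bool) → Bool) : Prop :=
  ψ.Respects f ∧ ∀ β : V → Bool, ∀ C ∈ ψ.matrix, Clause.Sat (ψ.Completed f β) C

def DQBF.IsTrue (ψ : DQBF V) : Prop := ∃ f, ψ.IsModel f

/-- Flip the value of variable `u` in an assignment. -/
def flipAt (u : V) (α : V → Bool) : V → Bool := fun w => if w = u then !(α w) else α w

/-- `(α, x, u)` is a dependency witness for the Skolem function set `f`. -/
def DepWitness (ψ : DQBF V) (f : V → (V → Bool) → Bool) (α : V → Bool) (x u : V) : Prop :=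
  f x α ≠ f x (flipAt u α)

/-! ## Resolution paths and dependency schemes -/

/-- The clauses of the matrix containing the literal `w`. -/
def DQBF.litClauses (ψ : DQBF V) (w : Lit V) : Finset (Clause V) :=
  ψ.matrix.filter fun C => w ∈ C

/-- `S_u`: the existential variables depending on `u`. -/
def DQBF.Sset (ψ : DQBF V) (u : V) : Finset V := ψ.E.filter fun x => u ∈ ψ.dep x

/-- `pathl^pu(w, ψ, χ, S)`: the least set of literals on `S`-variables reachable by a
`w`-pure resolution path starting from the clauses of `χ`. -/
inductive PathLPU (ψ : DQBF V) (w : Lit V) (χ : Finset (Clause V)) (S : Finset V) :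
    Lit V → Prop
  | base {C : Clause V} {l : Lit V} : C ∈ χ → l ∈ C → l.var ∈ S → PathLPU ψ w χ S l
  | step {p l : Lit V} {Ecl : Clause V} :
      PathLPU ψ w χ S p → Ecl ∈ ψ.matrix → p.negate ∈ Ecl → w.negate ∉ Ecl →
      l ∈ Ecl → l ≠ p.negate → l.var ∈ S → PathLPU ψ w χ S l

/-- `pathc^pu(w, ψ, χ, S)`: the corresponding set of reachable clauses. -/
inductive PathCPU (ψ : DQBF V) (w : Lit V) (χ : Finset (Clause V)) (S : Finset V) :
    Clause V → Prop
  | base {C : Clause V} : C ∈ χ → PathCPU ψ w χ S C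
  | step {p : Lit V} {Ecl : Clause V} :
      PathLPU ψ w χ S p → Ecl ∈ ψ.matrix → p.negate ∈ Ecl → w.negate ∉ Ecl →
      PathCPU ψ w χ S Ecl

/-- `pathl^rrs(ψ, χ, S)`: the analogous closure without the purity requirement. -/
inductive PathLRRS (ψ : DQBF V) (χ : Finset (Clause V)) (S : Finset V) : Lit V → Prop
  | base {C : Clause V} {l : Lit V} : C ∈ χ → l ∈ C → l.var ∈ S → PathLRRS ψ χ S l
  | step {p l : Lit V} {Ecl : Clause V} :
      PathLRRS ψ χ S p → Ecl ∈ ψ.matrix → p.negate ∈ Ecl →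
      l ∈ Ecl → l ≠ p.negate → l.var ∈ S → PathLRRS ψ χ S l

/-- `w ⤳ l` (pure path connection). -/
def ConnPU (ψ : DQBF V) (w l : Lit V) : Prop :=
  PathLPU ψ w (ψ.litClauses w) (ψ.Sset w.var) l

/-- `w ⤳ʳ l` (reflexive resolution path connection). -/
def ConnRRS (ψ : DQBF V) (w l : Lit V) : Prop :=
  PathLRRS ψ (ψ.litClauses w) (ψ.Sset w.var) l

/-- The pure universal dependency scheme `D^pu`. -/
def Dpu (ψ : DQBF V) (u x : V) : Prop :=
  u ∈ ψ.dep x ∧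
    ((ConnPU ψ ⟨u, true⟩ ⟨x, true⟩ ∧ ConnPU ψ ⟨u, false⟩ ⟨x, false⟩) ∨
      (ConnPU ψ ⟨u, false⟩ ⟨x, true⟩ ∧ ConnPU ψ ⟨u, true⟩ ⟨x, false⟩))

/-- The reflexive resolution path dependency scheme `D^rrs`. -/
def Drrs (ψ : DQBF V) (u x : V) : Prop :=
  u ∈ ψ.dep x ∧
    ((ConnRRS ψ ⟨u, true⟩ ⟨x, true⟩ ∧ ConnRRS ψ ⟨u, false⟩ ⟨x, false⟩) ∨
      (ConnRRS ψ ⟨u, false⟩ ⟨x, true⟩ ∧ ConnRRS ψ ⟨u, true⟩ ⟨x, false⟩))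

/-- The trivial dependency scheme `D^trv`. -/
def Dtrv (ψ : DQBF V) (u x : V) : Prop := u ∈ ψ.dep x

/-! ## LDQ(D)-Res -/

/-- Derivability of a clause in LDQ(D)-Res from the matrix of `ψ`, for a
dependency relation `D`. -/
inductive LDQDeriv (ψ : DQBF V) (D : V → V → Prop) : Clause V → Prop
  | ax {C : Clause V} : C ∈ ψ.matrix → LDQDeriv ψ D C
  | red {C : Clause V} {w : Lit V} :
      LDQDeriv ψ D (insert w C) → w.var ∈ ψ.U → w ∉ C →
      (∀ l ∈ C, l.var ∈ ψ.E → ¬ D w.var l.var) → LDQDeriv ψ D C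
  | res {Ec Fc : Clause V} {x : V} :
      x ∈ ψ.E →
      LDQDeriv ψ D (insert ⟨x, false⟩ Ec) → LDQDeriv ψ D (insert ⟨x, true⟩ Fc) →
      (⟨x, false⟩ : Lit V) ∉ Ec → (⟨x, true⟩ : Lit V) ∉ Fc →
      (∀ v ∈ Ec, v.var ∈ ψ.U → v.negate ∈ Fc → ¬ D v.var x) →
      LDQDeriv ψ D (Ec ∪ Fc)

/-- A single valid LDQ(D)-Res step, given the list of previously derived clauses. -/
def LDQStep (ψ : DQBF V) (D : V → V → Prop) (prev : List (Clause V)) (C : Clause V) : Prop :=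
  C ∈ ψ.matrix ∨
    (∃ w : Lit V, w.var ∈ ψ.U ∧ w ∉ C ∧ insert w C ∈ prev ∧
      ∀ l ∈ C, l.var ∈ ψ.E → ¬ D w.var l.var) ∨
    (∃ (x : V) (Ec Fc : Clause V), x ∈ ψ.E ∧ C = Ec ∪ Fc ∧
      (⟨x, false⟩ : Lit V) ∉ Ec ∧ (⟨x, true⟩ : Lit V) ∉ Fc ∧
      insert (⟨x, false⟩ : Lit V) Ec ∈ prev ∧ insert (⟨x, true⟩ : Lit V) Fc ∈ prev ∧
      ∀ v ∈ Ec, v.var ∈ ψ.U → v.negate ∈ Fc → ¬ D v.var x)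

/-- An LDQ(D)-Res proof: a list of clauses, each a valid step from the earlier ones. -/
def IsLDQProof (ψ : DQBF V) (D : V → V → Prop) (π : List (Clause V)) : Prop :=
  ∀ i : Fin π.length, LDQStep ψ D (π.take i.val) (π.get i)

def IsLDQRefutation (ψ : DQBF V) (D : V → V → Prop) (π : List (Clause V)) : Prop :=
  IsLDQProof ψ D π ∧ (∅ : Clause V) ∈ π

/-- A single valid Q-Res step. -/
def QResStep (ψ : DQBF V) (prev : List (Clause V)) (C : Clause V) : Prop :=
  C ∈ ψ.matrix ∨
    (∃ w : Lit V, w.var ∈ ψ.U ∧ w ∉ C ∧ w.negate ∉ C ∧ insert w C ∈ prev ∧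
      ∀ l ∈ C, l.var ∈ ψ.E → w.var ∉ ψ.dep l.var) ∨
    (∃ (x : V) (Ec Fc : Clause V), x ∈ ψ.E ∧ C = Ec ∪ Fc ∧
      (⟨x, false⟩ : Lit V) ∉ Ec ∧ (⟨x, true⟩ : Lit V) ∉ Fc ∧
      insert (⟨x, false⟩ : Lit V) Ec ∈ prev ∧ insert (⟨x, true⟩ : Lit V) Fc ∈ prev ∧
      ∀ v ∈ Ec, v.var ∈ ψ.U → v.negate ∉ Fc)

def IsQResProof (ψ : DQBF V) (π : List (Clause V)) : Prop :=
  ∀ i : Fin π.length, QResStep ψ (π.take i.val) (π.get i)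

def IsQResRefutation (ψ : DQBF V) (π : List (Clause V)) : Prop :=
  IsQResProof ψ π ∧ (∅ : Clause V) ∈ π

/-! ## QBFs: DQBFs with a linear quantifier prefix -/

structure QBF (V : Type) [DecidableEq V] extends DQBF V where
  ord : V → ℕ

/-- Well-formedness of a QBF: dependency sets are induced by the prefix order. -/
def QBF.WF (ψ : QBF V) : Prop :=
  ψ.toDQBF.WF ∧
    (∀ a ∈ ψ.U ∪ ψ.E, ∀ b ∈ ψ.U ∪ ψ.E, ψ.ord a = ψ.ord b → a = b) ∧
    ∀ x ∈ ψ.E, ∀ u, u ∈ ψ.dep x ↔ u ∈ ψ.U ∧ ψ.ord u < ψ.ord x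

/-! ## IndExt-QU-Res -/

/-- The clause `¬α` of negations of the literals of a partial assignment `α`. -/
def negAssign (α : Finset (Lit V)) : Clause V := α.image Lit.negate

/-- Size of a DQBF. -/
def DQBF.size (ψ : DQBF V) : ℕ := ψ.U.card + ψ.E.card + ∑ C ∈ ψ.matrix, (C.card + 1)

/-- IndExt-QU-Res derivations: from the DQBF `ψ0`, reach a (possibly extended)
prefix together with a set of derived clauses, in the given number of steps. -/
inductive IndExtDeriv (ψ0 : DQBF V) : DQBF V → Finset (Clause V) → ℕ → Prop
  | start : IndExtDeriv ψ0 ψ0 ψ0.matrix 0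
  | res {ψ : DQBF V} {Γ : Finset (Clause V)} {n : ℕ} {Ec Fc : Clause V} {x : V} :
      IndExtDeriv ψ0 ψ Γ n → x ∈ ψ.E →
      (⟨x, false⟩ : Lit V) ∉ Ec → (⟨x, true⟩ : Lit V) ∉ Fc →
      insert (⟨x, false⟩ : Lit V) Ec ∈ Γ → insert (⟨x, true⟩ : Lit V) Fc ∈ Γ →
      IndExtDeriv ψ0 ψ (insert (Ec ∪ Fc) Γ) (n + 1)
  | red {ψ : DQBF V} {Γ : Finset (Clause V)} {n : ℕ} {C : Clause V} {w : Lit V} :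
      IndExtDeriv ψ0 ψ Γ n → insert w C ∈ Γ → w.var ∈ ψ.U → w ∉ C → w.negate ∉ C →
      (∀ l ∈ C, l.var ∈ ψ.E → w.var ∉ ψ.dep l.var) →
      IndExtDeriv ψ0 ψ (insert C Γ) (n + 1)
  | ext {ψ : DQBF V} {Γ : Finset (Clause V)} {n : ℕ} (α : Finset (Lit V)) (y1 y2 v : V) :
      IndExtDeriv ψ0 ψ Γ n →
      (∀ a ∈ α, a.var ∈ ψ.U) → v ∉ ψ.U ∪ ψ.E → y1 ∈ ψ.U ∪ ψ.E → y2 ∈ ψ.U ∪ ψ.E →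
      IndExtDeriv ψ0
        ⟨ψ.U, insert v ψ.E,
          Function.update ψ.dep v ((ψ.depOf y1 ∪ ψ.depOf y2) \ α.image Lit.var), ψ.matrix⟩
        (insert (negAssign α ∪ ({⟨v, true⟩, ⟨y1, true⟩} : Clause V))
          (insert (negAssign α ∪ ({⟨v, true⟩, ⟨y2, true⟩} : Clause V))
            (insert (negAssign α ∪ ({⟨v, false⟩, ⟨y1, false⟩, ⟨y2, false⟩} : Clause V)) Γ)))
        (n + 1)
  | weakU {ψ : DQBF V} {Γ : Finset (Clause V)} {n : ℕ} (v : V) :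
      IndExtDeriv ψ0 ψ Γ n → v ∉ ψ.U ∪ ψ.E →
      IndExtDeriv ψ0 ⟨insert v ψ.U, ψ.E, ψ.dep, ψ.matrix⟩ Γ (n + 1)
  | weakE {ψ : DQBF V} {Γ : Finset (Clause V)} {n : ℕ} (v : V) (Dv : Finset V) :
      IndExtDeriv ψ0 ψ Γ n → v ∉ ψ.U ∪ ψ.E → Dv ⊆ ψ.U →
      IndExtDeriv ψ0 ⟨ψ.U, insert v ψ.E, Function.update ψ.dep v Dv, ψ.matrix⟩ Γ (n + 1)

/-- Substituting variables in a clause. -/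
def Clause.subst (σ : V → V) (C : Clause V) : Clause V :=
  C.image fun l => (⟨σ l.var, l.pos⟩ : Lit V)

/-! ## Unit propagation, outer variables, and DQRAT(D^pu) -/

/-- Literals derivable by unit propagation from a (possibly infinite) clause set. -/
inductive UPLit (Φ : Set (Clause V)) : Lit V → Prop
  | unit {C : Clause V} {l : Lit V} : C ∈ Φ → l ∈ C →
      (∀ l' ∈ C, l' ≠ l → UPLit Φ l'.negate) → UPLit Φ l

/-- `Φ ⊢₁ ⊥`: unit propagation derives a conflict. -/
def UPBot (Φ : Set (Clause V)) : Prop := ∃ C ∈ Φ, ∀ l ∈ C, UPLit Φ l.negate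

/-- The unit clauses negating the literals of `C`. -/
def negUnits (C : Clause V) : Set (Clause V) := {D | ∃ l ∈ C, D = ({l.negate} : Clause V)}

def DQBF.Inner (ψ : DQBF V) (u : V) : Set V := {y | y ∈ ψ.E ∧ u ∈ ψ.dep y}

/-- The set of outer variables of a variable. -/
def DQBF.Outer (ψ : DQBF V) (x : V) : Set V :=
  if x ∈ ψ.U then
    {x} ∪ ((↑(ψ.U ∪ ψ.E) : Set V) ∩ ⋂ z ∈ ψ.Inner x, {y | ψ.depOf y ⊆ ψ.dep z \ {x}})
  else {y | y ∈ ψ.U ∪ ψ.E ∧ ψ.depOf y ⊆ ψ.dep x}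

/-- `y ≲_Π x`. -/
def outerLe (ψ : DQBF V) (y x : V) : Prop := y ∈ ψ.Outer x

/-- `D_C`, the union of the dependency sets of the variables of a clause. -/
def depClause (ψ : DQBF V) (C : Clause V) : Finset V := C.biUnion fun l => ψ.depOf l.var

/-- The unit clauses used in the DQRAT side condition: outer literals of `D` negated. -/
def ratUnits (ψ : DQBF V) (D : Clause V) (l : Lit V) : Set (Clause V) :=
  {Dc | ∃ x ∈ D, x ≠ l.negate ∧ outerLe ψ x.var l.var ∧ Dc = ({x.negate} : Clause V)}

/-- DQRAT(D^pu) derivations: sequences of DQBFs, each obtained from the previous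
one by one of the rules ATA, Del, UR, DQRAT∃, DQRAT∀, BPM, D^pu. -/
inductive DQRATDeriv (ψ0 : DQBF V) : DQBF V → ℕ → Prop
  | start : DQRATDeriv ψ0 ψ0 0
  | ata {ψ : DQBF V} {n : ℕ} (C : Clause V) :
      DQRATDeriv ψ0 ψ n → UPBot ((↑ψ.matrix : Set (Clause V)) ∪ negUnits C) →
      DQRATDeriv ψ0 ⟨ψ.U, ψ.E, ψ.dep, insert C ψ.matrix⟩ (n + 1)
  | del {ψ : DQBF V} {n : ℕ} (C : Clause V) :
      DQRATDeriv ψ0 ψ n → C ∈ ψ.matrix →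
      DQRATDeriv ψ0 ⟨ψ.U, ψ.E, ψ.dep, ψ.matrix.erase C⟩ (n + 1)
  | ur {ψ : DQBF V} {n : ℕ} (C : Clause V) (l : Lit V) :
      DQRATDeriv ψ0 ψ n → insert l C ∈ ψ.matrix → l ∉ C → l.var ∈ ψ.U →
      l.var ∉ depClause ψ C →
      DQRATDeriv ψ0 ⟨ψ.U, ψ.E, ψ.dep, insert C (ψ.matrix.erase (insert l C))⟩ (n + 1)
  | ratE {ψ : DQBF V} {n : ℕ} (C : Clause V) (l : Lit V) :
      DQRATDeriv ψ0 ψ n → l.var ∈ ψ.E → l ∉ C →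
      (∀ D ∈ ψ.matrix, l.negate ∈ D →
        UPBot ((↑ψ.matrix : Set (Clause V)) ∪ negUnits (insert l C) ∪ ratUnits ψ D l)) →
      DQRATDeriv ψ0 ⟨ψ.U, ψ.E, ψ.dep, insert (insert l C) ψ.matrix⟩ (n + 1)
  | ratA {ψ : DQBF V} {n : ℕ} (C : Clause V) (l : Lit V) :
      DQRATDeriv ψ0 ψ n → l.var ∈ ψ.U → l ∉ C → insert l C ∈ ψ.matrix →
      (∀ D ∈ ψ.matrix, l.negate ∈ D →
        UPBot ((↑ψ.matrix : Set (Clause V)) ∪ negUnits C ∪ {({l} : Clause V)} ∪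
          ratUnits ψ D l)) →
      DQRATDeriv ψ0 ⟨ψ.U, ψ.E, ψ.dep, insert C (ψ.matrix.erase (insert l C))⟩ (n + 1)
  | bpm {ψ : DQBF V} {n : ℕ} (ψ' : DQBF V) :
      DQRATDeriv ψ0 ψ n → ψ.U ⊆ ψ'.U → ψ.E ⊆ ψ'.E → Disjoint ψ'.U ψ'.E →
      (∀ x ∈ ψ.E, ψ'.dep x = ψ.dep x) → (∀ x ∈ ψ'.E, ψ'.dep x ⊆ ψ'.U) →
      ψ'.matrix = ψ.matrix →
      DQRATDeriv ψ0 ψ' (n + 1)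
  | dpuStep {ψ : DQBF V} {n : ℕ} (ψ' : DQBF V) :
      DQRATDeriv ψ0 ψ n → ψ'.U = ψ.U → ψ'.E = ψ.E → ψ'.matrix = ψ.matrix →
      (∀ u x, x ∈ ψ.E → u ∉ ψ'.dep x → (u ∉ ψ.dep x ∨ ¬ Dpu ψ u x)) →
      DQRATDeriv ψ0 ψ' (n + 1)

/-- A DQRAT(D^pu) refutation of `ψ0` with `n` steps. -/
def DQRATRefutable (ψ0 : DQBF V) (n : ℕ) : Prop :=
  ∃ ψ : DQBF V, DQRATDeriv ψ0 ψ n ∧ (∅ : Clause V) ∈ ψ.matrix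

/-! ## The ts-LQParity formulas -/

inductive PVar : Type where
  | x : ℕ → PVar
  | z : PVar
  | t : ℕ → PVar
  | s : ℕ → PVar
  | b : PVar
deriving DecidableEq

def L (v : PVar) (b : Bool) : Lit PVar := ⟨v, b⟩

/-- The four clauses of `xor_l(o1, o2, o, zl)`. -/
def xorl (o1 o2 o : PVar) (zl : Lit PVar) : Finset (Clause PVar) :=
  { {zl, L o1 false, L o2 false, L o false},
    {zl, L o1 true,  L o2 true,  L o false},
    {zl, L o1 false, L o2 true,  L o true},
    {zl, L o1 true,  L o2 false, L o true} }

def tsMatrix (N : ℕ) : Finset (Clause PVar) :=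
  xorl (.x 1) (.x 2) (.t 2) (L .z true) ∪
    (Finset.Icc 3 N).biUnion (fun i => xorl (.t (i - 1)) (.x i) (.t i) (L .z true)) ∪
    xorl (.x 1) (.x 2) (.s 2) (L .z false) ∪
    (Finset.Icc 3 N).biUnion (fun i => xorl (.s (i - 1)) (.x i) (.s i) (L .z false)) ∪
    {{L .z true, L (.t N) true}, {L .z false, L (.s N) false}}

def tsDep : PVar → Finset PVar
  | .t _ => {.z}
  | .s _ => {.z}
  | .b => {.z}
  | _ => ∅

/-- The QBF ts-LQParity(N), presented as a DQBF. -/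
def tsLQParity (N : ℕ) : DQBF PVar where
  U := {.z}
  E := (Finset.Icc 1 N).image PVar.x ∪ (Finset.Icc 2 N).image PVar.t ∪
    (Finset.Icc 2 N).image PVar.s
  dep := tsDep
  matrix := tsMatrix N

def bridgedMatrix (N : ℕ) : Finset (Clause PVar) :=
  tsMatrix N ∪
    { {L .z true, L (.t N) false, L .b true}, {L .z true, L (.t N) true, L .b false},
      {L .z false, L (.s N) false, L .b true}, {L .z false, L (.s N) true, L .b false} }

/-- The QBF Bridged ts-LQParity(N), presented as a DQBF. -/
def bridged (N : ℕ) : DQBF PVar where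
  U := {.z}
  E := (Finset.Icc 1 N).image PVar.x ∪ (Finset.Icc 2 N).image PVar.t ∪
    (Finset.Icc 2 N).image PVar.s ∪ {.b}
  dep := tsDep
  matrix := bridgedMatrix N

/-! ## The NP-hardness gadget -/

inductive GVar (W : Type) : Type where
  | v : W → GVar W
  | u : GVar W
  | x : GVar W
deriving DecidableEq

/-- The gadget DQBF `∀(V ∪ {u}) ∃x(V ∪ {u}). (⋁_{v ∈ V} v) ∨ u ∨ ¬x`. -/
def gadget {W : Type} [DecidableEq W] (Vs : Finset W) : DQBF (GVar W) where
  U := Vs.image GVar.v ∪ {GVar.u}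
  E := {GVar.x}
  dep := fun y => if y = GVar.x then Vs.image GVar.v ∪ {GVar.u} else ∅
  matrix := {Vs.image (fun w => (⟨GVar.v w, true⟩ : Lit (GVar W))) ∪
    ({⟨GVar.u, true⟩, ⟨GVar.x, false⟩} : Clause (GVar W))}

/-- The Skolem function `f_x = φ(V) ∧ u`. -/
def gadgetSkolem {W : Type} [DecidableEq W] (φ : Finset (Clause W)) :
    GVar W → (GVar W → Bool) → Bool := fun y β =>
  if y = GVar.x then
    (decide (∀ C ∈ φ, ∃ l ∈ C, β (GVar.v l.var) = l.pos)) && β GVar.u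
  else false

/-!
Fix an assignment `α` of `x 1, …, x N` and extend it to the chain variables by prefix parities,
`t m, s m ↦ α 1 ⊕ ⋯ ⊕ α m`. This satisfies every `xorl` clause, so a matrix clause whose
non-`z` literals are all falsified is one of the two final clauses; it contains the `z`-literal
falsified by the winning universal move `z = α 1 ⊕ ⋯ ⊕ α N`. Call a clause an `α`-trigger if it
has no chain literal and all its `x`-literals are falsified by `α`; the empty clause is one.
Following falsified premises backwards, every line before the first trigger that is falsified
off `z` and not `z`-tautological contains that `z`-literal. The first trigger is not
`z`-tautological: a chain literal always comes with the `z`-literal of its chain, so the side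
condition of LDQ(D^trv)-Res blocks merging `z` over a chain pivot, while over an `x`-pivot, or
before a reduction, the falsified premise would be an earlier trigger.

So the chain-free lines of a refutation, read as cubes over `x 1, …, x N`, form a decision list
computing parity. Greedily fixing `N / 4` variables, each time the literal occurring in most
surviving wide cubes, kills all cubes with `N / 2` variables unless the list has
`(16 / 15) ^ (N / 4)` elements; then the first cube consistent with the restriction leaves some
variable free, and flipping it changes the parity but not the answer.
-/

open Finset

def prefixXor (α : ℕ → Bool) : ℕ → Bool
  | 0 => false
  | m + 1 => xor (prefixXor α m) (α (m + 1))

theorem prefixXor_of_pos (α : ℕ → Bool) {i : ℕ} (hi : 1 ≤ i) :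
    prefixXor α i = xor (prefixXor α (i - 1)) (α i) := by
  obtain ⟨k, rfl⟩ := Nat.exists_eq_add_of_le' hi
  rfl

theorem prefixXor_flipAt_of_lt (α : ℕ → Bool) {m k : ℕ} (h : k < m) :
    prefixXor (flipAt m α) k = prefixXor α k := by
  induction k with
  | zero => rfl
  | succ k ih =>
    simp only [prefixXor, ih (by omega), flipAt, if_neg (show k + 1 ≠ m by omega)]

theorem prefixXor_flipAt (α : ℕ → Bool) {m n : ℕ} (hm : 1 ≤ m) (hmn : m ≤ n) :
    prefixXor (flipAt m α) n = !prefixXor α n := by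
  induction n with
  | zero => omega
  | succ n ih =>
    rcases hmn.lt_or_eq with hlt | rfl
    · simp only [prefixXor, ih (by omega), flipAt, if_neg (show n + 1 ≠ m by omega),
        Bool.not_xor]
    · simp [prefixXor, prefixXor_flipAt_of_lt α (Nat.lt_succ_self n), flipAt]

/-- A cube is a conjunction of literals `x_v = b`, recorded as the pairs `(v, b)`. -/
abbrev Cube (ι : Type) := Finset (ι × Bool)

namespace Cube

variable {ι : Type}

def vars [DecidableEq ι] (E : Cube ι) : Finset ι := E.image Prod.fst

def Matches (E : Cube ι) (α : ι → Bool) : Prop := ∀ p ∈ E, α p.1 = p.2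

instance (E : Cube ι) (α : ι → Bool) : Decidable (E.Matches α) := by
  unfold Matches; infer_instance

def Survives (E : Cube ι) (S : Finset ι) (g : ι → Bool) : Prop :=
  ∀ p ∈ E, p.1 ∈ S → p.2 = g p.1

instance [DecidableEq ι] (E : Cube ι) (S : Finset ι) (g : ι → Bool) :
    Decidable (E.Survives S g) := by
  unfold Survives; infer_instance

theorem Matches.survives {E : Cube ι} {α : ι → Bool} (h : E.Matches α) {S : Finset ι}
    {g : ι → Bool} (hαg : ∀ v ∈ S, α v = g v) : E.Survives S g :=
  fun p hp hpS => (h p hp).symm.trans (hαg p.1 hpS)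

theorem Matches.flipAt [DecidableEq ι] {E : Cube ι} {α : ι → Bool} (h : E.Matches α) {m : ι}
    (hm : m ∉ E.vars) : E.Matches (flipAt m α) := by
  intro p hp
  have hpm : p.1 ≠ m := fun h => hm (mem_image.mpr ⟨p, hp, h⟩)
  simpa [_root_.flipAt, hpm] using h p hp

theorem card_vars_sdiff_le [DecidableEq ι] {E : Cube ι} {X S : Finset ι} (hE : E.vars ⊆ X) :
    #(E.vars \ S) ≤ #{p ∈ (X \ S) ×ˢ (univ : Finset Bool) | p ∈ E} := by
  refine le_trans (card_le_card fun v hv => ?_) (card_image_le (f := Prod.fst))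
  obtain ⟨hvE, hvS⟩ := mem_sdiff.mp hv
  obtain ⟨p, hp, rfl⟩ := mem_image.mp hvE
  exact mem_image.mpr ⟨p, mem_filter.mpr
    ⟨mem_product.mpr ⟨mem_sdiff.mpr ⟨hE hvE, hvS⟩, mem_univ _⟩, hp⟩, rfl⟩

end Cube

abbrev DecisionList (ι : Type) := List (Cube ι × Bool)

namespace DecisionList

variable {ι : Type}

def eval (dl : DecisionList ι) (α : ι → Bool) : Option Bool :=
  (dl.find? fun e => decide (e.1.Matches α)).map Prod.snd

theorem eval_eq_of_append {dl as bs : DecisionList ι} {e : Cube ι × Bool} {α : ι → Bool}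
    (hdl : dl = as ++ e :: bs) (he : e.1.Matches α) (has : ∀ a ∈ as, ¬ a.1.Matches α) :
    dl.eval α = some e.2 := by
  have : dl.find? (fun e => decide (e.1.Matches α)) = some e :=
    List.find?_eq_some_iff_append.mpr ⟨by simpa using he, as, bs, hdl, by simpa using has⟩
  simp [eval, this]

end DecisionList

section Restriction

variable {ι κ : Type} [DecidableEq ι] (E : κ → Cube ι) (A : Finset κ) (n : ℕ)

def wideSurvivors (S : Finset ι) (g : ι → Bool) : Finset κ :=
  {i ∈ A | n / 2 ≤ #(E i).vars ∧ (E i).Survives S g}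

variable {E A n}

/-- Double counting over the pairs `(v, b)` with `v ∉ S`: each wide cube contains at least
`#X / 2 - #S` of them, and there are at most `2 * #X` pairs. -/
theorem exists_frequent_literal {X S : Finset ι} (hS : #S < #X / 4) {B : Finset κ}
    (hB : ∀ i ∈ B, (E i).vars ⊆ X ∧ #X / 2 ≤ #(E i).vars) :
    ∃ v ∈ X \ S, ∃ b : Bool, #B ≤ 16 * #{i ∈ B | (v, b) ∈ E i} := by
  set P := (X \ S) ×ˢ (univ : Finset Bool)
  have hPcard : #P ≤ 2 * #X := by
    simp only [P, card_product, card_univ, Fintype.card_bool]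
    have := card_le_card (sdiff_subset (s := X) (t := S))
    omega
  have hPne : P.Nonempty := by
    rw [← card_pos]
    have := le_card_sdiff S X
    simp only [P, card_product, card_univ, Fintype.card_bool]
    omega
  have hcube : ∀ i ∈ B, #X / 2 - #S ≤ #{p ∈ P | p ∈ E i} := fun i hi =>
    calc #X / 2 - #S ≤ #(E i).vars - #S := by have := (hB i hi).2; omega
      _ ≤ #((E i).vars \ S) := le_card_sdiff _ _
      _ ≤ #{p ∈ P | p ∈ E i} := Cube.card_vars_sdiff_le (hB i hi).1
  have hsum : #B * (#X / 2 - #S) ≤ ∑ p ∈ P, #{i ∈ B | p ∈ E i} :=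
    calc #B * (#X / 2 - #S) = ∑ _i ∈ B, (#X / 2 - #S) := by rw [sum_const, smul_eq_mul]
      _ ≤ ∑ i ∈ B, #{p ∈ P | p ∈ E i} := sum_le_sum hcube
      _ = ∑ p ∈ P, #{i ∈ B | p ∈ E i} :=
        sum_card_bipartiteAbove_eq_sum_card_bipartiteBelow (fun i p => p ∈ E i)
  obtain ⟨⟨v, b⟩, hp, hvb⟩ :
      ∃ p ∈ P, #B * (#X / 2 - #S) ≤ #P * #{i ∈ B | p ∈ E i} := by
    apply exists_le_of_sum_le hPne
    rw [sum_const, smul_eq_mul, ← mul_sum]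
    exact Nat.mul_le_mul_left _ hsum
  refine ⟨v, (mem_product.mp hp).1, b, ?_⟩
  set k := #{i ∈ B | (v, b) ∈ E i}
  have hX : #X ≤ 8 * (#X / 2 - #S) := by omega
  have : #X * #B ≤ #X * (16 * k) :=
    calc #X * #B ≤ 8 * (#X / 2 - #S) * #B := Nat.mul_le_mul_right _ hX
      _ ≤ 8 * (#P * k) := by rw [mul_assoc, mul_comm _ #B]; exact Nat.mul_le_mul_left _ hvb
      _ ≤ 8 * (2 * #X * k) := by gcongr
      _ = #X * (16 * k) := by ring
  exact Nat.le_of_mul_le_mul_left this (by omega)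

theorem wideSurvivors_insert_subset {S : Finset ι} {g : ι → Bool} {v : ι} (hv : v ∉ S)
    (b : Bool) :
    wideSurvivors E A n (insert v S) (Function.update g v !b) ⊆
      {i ∈ wideSurvivors E A n S g | (v, b) ∉ E i} := by
  intro i hi
  obtain ⟨hiA, hwide, hsurv⟩ := mem_filter.mp hi
  refine mem_filter.mpr ⟨mem_filter.mpr ⟨hiA, hwide, fun p hp hpS => ?_⟩, fun hvb => ?_⟩
  · have hpv : p.1 ≠ v := by rintro h; exact hv (h ▸ hpS)
    simpa [Function.update_of_ne hpv] using hsurv p hp (mem_insert_of_mem hpS)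
  · simpa using hsurv (v, b) hvb (mem_insert_self v S)

/-- Fixing `j ≤ #X / 4` variables greedily, each time the literal that is most frequent among
the surviving wide cubes, falsifies at least a sixteenth of them at every step. -/
theorem exists_restriction_few_wideSurvivors {X : Finset ι}
    (hvars : ∀ i ∈ A, (E i).vars ⊆ X) :
    ∀ j ≤ #X / 4, ∃ S ⊆ X, #S ≤ j ∧ ∃ g : ι → Bool,
      16 ^ j * #(wideSurvivors E A #X S g) ≤ 15 ^ j * #A := by
  intro j
  induction j with
  | zero =>
    exact fun _ => ⟨∅, empty_subset _, le_rfl, fun _ => false,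
      by rw [pow_zero, pow_zero, one_mul, one_mul]; exact card_filter_le _ _⟩
  | succ j ih =>
    intro hj
    obtain ⟨S, hSX, hSj, g, hS⟩ := ih (by omega)
    set B := wideSurvivors E A #X S g with hB
    obtain ⟨v, hv, b, hvb⟩ := exists_frequent_literal (E := E) (S := S) (by omega)
      (B := B) fun i hi =>
        ⟨hvars i (mem_filter.mp hi).1, (mem_filter.mp hi).2.1⟩
    obtain ⟨hvX, hvS⟩ := mem_sdiff.mp hv
    refine ⟨insert v S, insert_subset hvX hSX, (card_insert_le _ _).trans (by omega),
      Function.update g v !b, ?_⟩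
    have hkill : #(wideSurvivors E A #X (insert v S) (Function.update g v !b)) +
        #{i ∈ B | (v, b) ∈ E i} ≤ #B := by
      have hsub := wideSurvivors_insert_subset (E := E) (A := A) (n := #X) (g := g) hvS b
      rw [← hB] at hsub
      have := card_le_card hsub
      have := card_filter_add_card_filter_not (s := B) (fun i => (v, b) ∈ E i)
      omega
    calc 16 ^ (j + 1) * #(wideSurvivors E A #X (insert v S) (Function.update g v !b))
        ≤ 16 ^ j * (15 * #B) := by
          rw [pow_succ, mul_assoc]; exact Nat.mul_le_mul_left _ (by omega)
      _ = 15 * (16 ^ j * #B) := by ring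
      _ ≤ 15 * (15 ^ j * #A) := by gcongr
      _ = 15 ^ (j + 1) * #A := by ring

end Restriction

namespace DecisionList

variable {ι : Type} [DecidableEq ι] {X : Finset ι} {f : (ι → Bool) → Bool} {dl : DecisionList ι}

/-- The first cube consistent with the restriction `g` on `S` is the first cube matched by every
assignment extending the restriction that matches it. If it were narrow, a variable of `X`
outside `S` and the cube could be flipped without changing the value of `dl`. -/
theorem exists_wide_of_eval_eq (hsens : ∀ α, ∀ m ∈ X, f (flipAt m α) ≠ f α)
    (hdl : ∀ α, dl.eval α = some (f α)) {S : Finset ι} (hS : #S ≤ #X / 4) (g : ι → Bool) :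
    ∃ e ∈ dl, ∃ α, (∀ v ∈ S, α v = g v) ∧ e.1.Matches α ∧ #X / 2 ≤ #e.1.vars := by
  classical
  obtain ⟨e, hfind⟩ : ∃ e, dl.find? (fun e => decide (∃ α, (∀ v ∈ S, α v = g v) ∧
      e.1.Matches α)) = some e := by
    rw [← Option.isSome_iff_exists, List.find?_isSome]
    obtain ⟨e, hfind, -⟩ := Option.map_eq_some_iff.mp (hdl g)
    exact ⟨e, List.mem_of_find?_eq_some hfind,
      decide_eq_true ⟨g, fun _ _ => rfl, by simpa using List.find?_some hfind⟩⟩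
  obtain ⟨hpe, as, bs, hsplit, has⟩ := List.find?_eq_some_iff_append.mp hfind
  obtain ⟨α, hαg, hαe⟩ := of_decide_eq_true hpe
  refine ⟨e, by simp [hsplit], α, hαg, hαe, ?_⟩
  by_contra! hnarrow
  replace has : ∀ a ∈ as, ∀ β, (∀ v ∈ S, β v = g v) → ¬ a.1.Matches β := by simpa using has
  have heval : ∀ β, (∀ v ∈ S, β v = g v) → e.1.Matches β → dl.eval β = some e.2 :=
    fun β hβg hβe => eval_eq_of_append hsplit hβe fun a ha => has a ha β hβg
  obtain ⟨m, hmX, hmfree⟩ : ∃ m ∈ X, m ∉ S ∪ e.1.vars := by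
    apply exists_mem_notMem_of_card_lt_card
    have := card_union_le S e.1.vars
    omega
  have hflip_g : ∀ v ∈ S, flipAt m α v = g v := fun v hv => by
    rw [← hαg v hv]; simp [flipAt, show v ≠ m by rintro rfl; simp_all]
  apply hsens α m hmX
  apply Option.some_injective
  rw [← hdl, ← hdl, heval α hαg hαe,
    heval _ hflip_g (hαe.flipAt fun h => hmfree (mem_union_right _ h))]

theorem sixteen_pow_le_of_eval_eq (hsens : ∀ α, ∀ m ∈ X, f (flipAt m α) ≠ f α)
    (hvars : ∀ e ∈ dl, e.1.vars ⊆ X) (hdl : ∀ α, dl.eval α = some (f α)) :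
    16 ^ (#X / 4) ≤ 15 ^ (#X / 4) * (dl.length + 1) := by
  by_contra! hlt
  obtain ⟨S, -, hS, g, hsurv⟩ := exists_restriction_few_wideSurvivors
    (E := fun i : Fin dl.length => dl[i].1) (A := univ)
    (fun i _ => hvars _ (List.getElem_mem _)) _ le_rfl
  obtain ⟨e, he, α, hαg, hαe, hwide⟩ := exists_wide_of_eval_eq hsens hdl hS g
  obtain ⟨i, hi, rfl⟩ := List.getElem_of_mem he
  have hmem : (⟨i, hi⟩ : Fin dl.length) ∈
      wideSurvivors (fun i : Fin dl.length => dl[i].1) univ #X S g :=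
    mem_filter.mpr ⟨mem_univ _, hwide, hαe.survives hαg⟩
  rw [card_univ, Fintype.card_fin] at hsurv
  have hle : 16 ^ (#X / 4) ≤ 15 ^ (#X / 4) * dl.length :=
    le_trans (Nat.le_mul_of_pos_right _ (card_pos.mpr ⟨_, hmem⟩)) hsurv
  rw [mul_add_one] at hlt
  exact absurd (hle.trans_lt ((Nat.le_add_right _ _).trans_lt hlt)) (lt_irrefl _)

end DecisionList

theorem Finset.mem_of_mem_insert_of_var_ne {l p : Lit V} {C : Clause V} (h : l ∈ insert p C)
    (hne : l.var ≠ p.var) : l ∈ C :=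
  (mem_insert.mp h).resolve_left fun h' => hne (congrArg Lit.var h')

namespace IsLDQProof

variable {ψ : DQBF V} {D : V → V → Prop} {π : List (Clause V)}

theorem forall_mem {P : Clause V → Prop} (hπ : IsLDQProof ψ D π)
    (hstep : ∀ prev C, prev ⊆ π → (∀ C' ∈ prev, P C') → LDQStep ψ D prev C → P C) :
    ∀ C ∈ π, P C := by
  suffices ∀ i (hi : i < π.length), P π[i] by
    intro C hC
    obtain ⟨i, hi, rfl⟩ := List.getElem_of_mem hC
    exact this i hi
  intro i
  induction i using Nat.strong_induction_on with
  | _ i ih =>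
    intro hi
    refine hstep (π.take i) _ (List.take_subset _ _) (fun C' hC' => ?_)
      (by simpa using hπ ⟨i, hi⟩)
    obtain ⟨j, hj, rfl⟩ := List.getElem_of_mem hC'
    rw [List.length_take] at hj
    simpa using ih j (by omega) (by omega)

theorem of_append_cons {as bs : List (Clause V)} {C : Clause V}
    (hπ : IsLDQProof ψ D (as ++ C :: bs)) : IsLDQProof ψ D as ∧ LDQStep ψ D as C := by
  refine ⟨fun i => ?_, by simpa using hπ ⟨as.length, by simp⟩⟩
  have := hπ ⟨i, by simp; omega⟩
  simp only [List.get_eq_getElem] at this ⊢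
  rwa [List.take_append_of_le_length (by omega), List.getElem_append_left] at this

theorem var_mem (hπ : IsLDQProof ψ D π) (hψ : ∀ C ∈ ψ.matrix, ∀ l ∈ C, l.var ∈ ψ.U ∪ ψ.E) :
    ∀ C ∈ π, ∀ l ∈ C, l.var ∈ ψ.U ∪ ψ.E := by
  refine hπ.forall_mem fun prev C _ hprev hstep => ?_
  rcases hstep with hax | ⟨w, -, -, hmem, -⟩ | ⟨x, Ec, Fc, -, rfl, -, -, hE, hF, -⟩
  · exact hψ C hax
  · exact fun l hl => hprev _ hmem l (mem_insert_of_mem hl)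
  · intro l hl
    rcases mem_union.mp hl with h | h
    · exact hprev _ hE l (mem_insert_of_mem h)
    · exact hprev _ hF l (mem_insert_of_mem h)

end IsLDQProof

def PVar.isChain : PVar → Bool
  | .t _ | .s _ => true
  | _ => false

/-- The sign of `z` in the clauses of the chain that a variable belongs to. -/
def PVar.zSign : PVar → Bool
  | .s _ => false
  | _ => true

namespace TsLQParity

variable {N : ℕ} {α : ℕ → Bool}

def canonicalExt (α : ℕ → Bool) : PVar → Bool
  | .x j => α j
  | .t m | .s m => prefixXor α m
  | _ => false

def FalsifiedOffZ (α : ℕ → Bool) (C : Clause PVar) : Prop :=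
  ∀ l ∈ C, l.var ≠ .z → canonicalExt α l.var ≠ l.pos

def ZTaut (C : Clause PVar) : Prop := L .z true ∈ C ∧ L .z false ∈ C

def ChainFree (C : Clause PVar) : Prop := ∀ l ∈ C, l.var.isChain = false

instance (C : Clause PVar) : Decidable (ChainFree C) := by unfold ChainFree; infer_instance

def IsTrigger (α : ℕ → Bool) (C : Clause PVar) : Prop := ChainFree C ∧ FalsifiedOffZ α C

def ZGuarded (C : Clause PVar) : Prop := ∀ l ∈ C, l.var.isChain = true → L .z l.var.zSign ∈ C

/-- The `z`-literal falsified by the winning move `z = α 1 ⊕ ⋯ ⊕ α N` of the universal player. -/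
def zLit (α : ℕ → Bool) (N : ℕ) : Lit PVar := L .z !(prefixXor α N)

theorem mem_xorl {C : Clause PVar} {o1 o2 o : PVar} {zl : Lit PVar} :
    C ∈ xorl o1 o2 o zl ↔
      C = {zl, L o1 false, L o2 false, L o false} ∨ C = {zl, L o1 true, L o2 true, L o false} ∨
      C = {zl, L o1 false, L o2 true, L o true} ∨ C = {zl, L o1 true, L o2 false, L o true} := by
  simp [xorl]

theorem mem_tsMatrix {C : Clause PVar} :
    C ∈ tsMatrix N ↔
      C ∈ xorl (.x 1) (.x 2) (.t 2) (L .z true) ∨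
      (∃ i ∈ Icc 3 N, C ∈ xorl (.t (i - 1)) (.x i) (.t i) (L .z true)) ∨
      C ∈ xorl (.x 1) (.x 2) (.s 2) (L .z false) ∨
      (∃ i ∈ Icc 3 N, C ∈ xorl (.s (i - 1)) (.x i) (.s i) (L .z false)) ∨
      C = {L .z true, L (.t N) true} ∨ C = {L .z false, L (.s N) false} := by
  simp only [tsMatrix, mem_union, mem_biUnion, mem_insert, mem_singleton, or_assoc]

theorem mem_vars_tsLQParity {v : PVar} :
    v ∈ (tsLQParity N).U ∪ (tsLQParity N).E ↔
      v = .z ∨ (∃ j ∈ Icc 1 N, v = .x j) ∨ (∃ m ∈ Icc 2 N, v = .t m) ∨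
        ∃ m ∈ Icc 2 N, v = .s m := by
  simp only [tsLQParity, mem_union, mem_singleton, mem_image, or_assoc]
  aesop

theorem var_eq_of_mem_xorl {C : Clause PVar} {o1 o2 o : PVar} {zl l : Lit PVar}
    (hC : C ∈ xorl o1 o2 o zl) (hl : l ∈ C) :
    l = zl ∨ l.var = o1 ∨ l.var = o2 ∨ l.var = o := by
  rcases mem_xorl.mp hC with rfl | rfl | rfl | rfl <;>
  · simp only [mem_insert, mem_singleton] at hl
    rcases hl with rfl | rfl | rfl | rfl <;> simp [L]

theorem zl_mem_of_mem_xorl {C : Clause PVar} {o1 o2 o : PVar} {zl : Lit PVar}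
    (hC : C ∈ xorl o1 o2 o zl) : zl ∈ C := by
  rcases mem_xorl.mp hC with rfl | rfl | rfl | rfl <;> simp

theorem exists_mem_xorl_out {C : Clause PVar} {o1 o2 o : PVar} {zl : Lit PVar}
    (hC : C ∈ xorl o1 o2 o zl) : ∃ b, L o b ∈ C := by
  rcases mem_xorl.mp hC with rfl | rfl | rfl | rfl
  exacts [⟨false, by simp⟩, ⟨false, by simp⟩, ⟨true, by simp⟩, ⟨true, by simp⟩]

theorem var_mem_of_mem_tsMatrix (hN : 2 ≤ N) {C : Clause PVar} (hC : C ∈ tsMatrix N) :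
    ∀ l ∈ C, l.var ∈ (tsLQParity N).U ∪ (tsLQParity N).E := by
  intro l hl
  rw [mem_vars_tsLQParity]
  rcases mem_tsMatrix.mp hC with h | ⟨i, hi, h⟩ | h | ⟨i, hi, h⟩ | rfl | rfl
  all_goals first
    | (rcases var_eq_of_mem_xorl h hl with rfl | h' | h' | h' <;> simp_all [L] <;> omega)
    | (simp only [mem_insert, mem_singleton] at hl
       rcases hl with rfl | rfl <;> simp_all [L])

theorem not_falsifiedOffZ_of_mem_xorl {o1 o2 o : PVar} {zl : Lit PVar}
    {C : Clause PVar} (hC : C ∈ xorl o1 o2 o zl) (h1 : o1 ≠ .z) (h2 : o2 ≠ .z) (h : o ≠ .z)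
    (hxor : canonicalExt α o = xor (canonicalExt α o1) (canonicalExt α o2)) :
    ¬ FalsifiedOffZ α C := by
  intro hF
  rcases mem_xorl.mp hC with rfl | rfl | rfl | rfl <;>
  · simp only [FalsifiedOffZ, mem_insert, mem_singleton, forall_eq_or_imp, forall_eq, L, ne_eq,
      h1, h2, h, not_false_eq_true, forall_const, hxor] at hF
    revert hF
    cases canonicalExt α o1 <;> cases canonicalExt α o2 <;> simp

theorem zLit_mem_of_mem_tsMatrix {C : Clause PVar} (hC : C ∈ tsMatrix N)
    (hF : FalsifiedOffZ α C) : zLit α N ∈ C := by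
  have hchain : ∀ i ∈ Icc 3 N, prefixXor α i = xor (prefixXor α (i - 1)) (α i) :=
    fun i hi => prefixXor_of_pos α (by simp at hi; omega)
  rcases mem_tsMatrix.mp hC with h | ⟨i, hi, h⟩ | h | ⟨i, hi, h⟩ | rfl | rfl
  · exact absurd hF (not_falsifiedOffZ_of_mem_xorl h (by simp) (by simp) (by simp)
      (by simp [canonicalExt, prefixXor]))
  · exact absurd hF
      (not_falsifiedOffZ_of_mem_xorl h (by simp) (by simp) (by simp) (hchain i hi))
  · exact absurd hF (not_falsifiedOffZ_of_mem_xorl h (by simp) (by simp) (by simp)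
      (by simp [canonicalExt, prefixXor]))
  · exact absurd hF
      (not_falsifiedOffZ_of_mem_xorl h (by simp) (by simp) (by simp) (hchain i hi))
  · have := hF (L (.t N) true) (by simp) (by simp [L])
    simp_all [zLit, L, canonicalExt]
  · have := hF (L (.s N) false) (by simp) (by simp [L])
    simp_all [zLit, L, canonicalExt]

theorem not_chainFree_of_mem_tsMatrix {C : Clause PVar} (hC : C ∈ tsMatrix N) :
    ¬ ChainFree C := by
  intro hfree
  have hchain : ∀ v b, L v b ∈ C → v.isChain = false := fun v b hl => hfree _ hl
  rcases mem_tsMatrix.mp hC with h | ⟨i, -, h⟩ | h | ⟨i, -, h⟩ | rfl | rfl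
  all_goals try obtain ⟨b, hb⟩ := exists_mem_xorl_out h; simpa [PVar.isChain] using hchain _ _ hb
  · simpa [PVar.isChain] using hchain (.t N) true (by simp)
  · simpa [PVar.isChain] using hchain (.s N) false (by simp)

theorem zGuarded_of_mem_tsMatrix {C : Clause PVar} (hC : C ∈ tsMatrix N) :
    ZGuarded C := by
  intro l hl hch
  rcases mem_tsMatrix.mp hC with h | ⟨i, -, h⟩ | h | ⟨i, -, h⟩ | rfl | rfl
  all_goals first
    | (have hz := zl_mem_of_mem_xorl h
       rcases var_eq_of_mem_xorl h hl with rfl | h' | h' | h' <;>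
        simp_all [L, PVar.isChain, PVar.zSign])
    | (simp only [mem_insert, mem_singleton] at hl
       rcases hl with rfl | rfl <;> simp_all [L, PVar.isChain, PVar.zSign])

theorem FalsifiedOffZ.insert_z {C : Clause PVar} (h : FalsifiedOffZ α C) {w : Lit PVar}
    (hw : w.var = .z) : FalsifiedOffZ α (insert w C) := by
  intro l hl hlz
  rcases mem_insert.mp hl with rfl | hl
  · exact absurd hw hlz
  · exact h l hl hlz

theorem ChainFree.mono {C C' : Clause PVar} (h : ChainFree C) (hsub : C' ⊆ C) : ChainFree C' :=
  fun l hl => h l (hsub hl)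

theorem ChainFree.insert {C : Clause PVar} (h : ChainFree C) {p : Lit PVar}
    (hp : p.var.isChain = false) : ChainFree (insert p C) := by
  intro l hl
  rcases mem_insert.mp hl with rfl | hl
  exacts [hp, h l hl]

theorem not_zTaut_of_subset_insert {C P : Clause PVar} {p : Lit PVar} (hp : p.var ≠ .z)
    (hsub : P ⊆ insert p C) (hC : ¬ ZTaut C) : ¬ ZTaut P :=
  fun ⟨h1, h2⟩ => hC ⟨mem_of_mem_insert_of_var_ne (hsub h1) (Ne.symm hp),
    mem_of_mem_insert_of_var_ne (hsub h2) (Ne.symm hp)⟩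

theorem ZGuarded.of_insert {C : Clause PVar} {p : Lit PVar} (h : ZGuarded (insert p C))
    (hp : p.var ≠ .z) : ZGuarded C :=
  fun l hl hch => mem_of_mem_insert_of_var_ne (h l (mem_insert_of_mem hl) hch) (Ne.symm hp)

theorem ZGuarded.union {C C' : Clause PVar} (h : ZGuarded C) (h' : ZGuarded C') :
    ZGuarded (C ∪ C') := by
  intro l hl hch
  rcases mem_union.mp hl with hl | hl
  exacts [mem_union_left _ (h l hl hch), mem_union_right _ (h' l hl hch)]

theorem eq_z_of_mem_U {v : PVar} (hv : v ∈ (tsLQParity N).U) : v = .z := by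
  simpa [tsLQParity] using hv

theorem ne_z_of_mem_E {v : PVar} (hv : v ∈ (tsLQParity N).E) : v ≠ .z := by
  rintro rfl
  simp [tsLQParity] at hv

theorem dtrv_z_of_isChain {v : PVar} (hv : v.isChain = true) : Dtrv (tsLQParity N) .z v := by
  cases v <;> simp_all [PVar.isChain, Dtrv, tsLQParity, tsDep]

/-- `z` depends on every chain variable, so it cannot be reduced next to one. -/
theorem chainFree_of_reduction {C : Clause PVar} {w : Lit PVar}
    (hw : w.var ∈ (tsLQParity N).U)
    (hC : ∀ l ∈ C, l.var ∈ (tsLQParity N).U ∪ (tsLQParity N).E)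
    (hred : ∀ l ∈ C, l.var ∈ (tsLQParity N).E → ¬ Dtrv (tsLQParity N) w.var l.var) :
    ChainFree C := by
  intro l hl
  by_contra hch
  rw [Bool.not_eq_false] at hch
  rw [eq_z_of_mem_U hw] at hred
  rcases mem_union.mp (hC l hl) with hU | hE
  · simp [eq_z_of_mem_U hU, PVar.isChain] at hch
  · exact hred l hl hE (dtrv_z_of_isChain hch)

theorem zGuarded_of_mem (hN : 2 ≤ N) {π : List (Clause PVar)}
    (hπ : IsLDQProof (tsLQParity N) (Dtrv (tsLQParity N)) π) : ∀ C ∈ π, ZGuarded C := by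
  have hvars := hπ.var_mem fun _ => var_mem_of_mem_tsMatrix hN
  refine hπ.forall_mem fun prev C hsub hprev hstep => ?_
  rcases hstep with hax | ⟨w, hwU, -, hmem, hred⟩ | ⟨x, Ec, Fc, hx, rfl, -, -, hE, hF, -⟩
  · exact zGuarded_of_mem_tsMatrix hax
  · have hfree := chainFree_of_reduction hwU
      (fun l hl => hvars _ (hsub hmem) l (mem_insert_of_mem hl)) hred
    exact fun l hl hch => absurd (hfree l hl) (by simp [hch])
  · exact ((hprev _ hE).of_insert (ne_z_of_mem_E hx)).union
      ((hprev _ hF).of_insert (ne_z_of_mem_E hx))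

theorem exists_falsified_premise {prev : List (Clause PVar)} {x : PVar} {Ec Fc : Clause PVar}
    (hE : insert ⟨x, false⟩ Ec ∈ prev) (hF : insert ⟨x, true⟩ Fc ∈ prev)
    (hfal : FalsifiedOffZ α (Ec ∪ Fc)) :
    ∃ P ∈ prev, FalsifiedOffZ α P ∧ ∃ b, P ⊆ insert ⟨x, b⟩ (Ec ∪ Fc) := by
  cases hb : canonicalExt α x
  · refine ⟨_, hF, ?_, true, insert_subset_insert _ subset_union_right⟩
    intro l hl hlz
    rcases mem_insert.mp hl with rfl | hl
    · simp [hb]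
    · exact hfal l (mem_union_right _ hl) hlz
  · refine ⟨_, hE, ?_, false, insert_subset_insert _ subset_union_left⟩
    intro l hl hlz
    rcases mem_insert.mp hl with rfl | hl
    · simp [hb]
    · exact hfal l (mem_union_left _ hl) hlz

theorem not_zTaut_of_resolvent {x : PVar} {Ec Fc : Clause PVar} {b : Bool}
    (hside : ∀ v ∈ Ec, v.var ∈ (tsLQParity N).U → v.negate ∈ Fc → ¬ Dtrv (tsLQParity N) v.var x)
    (hx : Dtrv (tsLQParity N) .z x) (hE : L .z b ∈ Ec) (hF : L .z b ∈ Fc) :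
    ¬ ZTaut (Ec ∪ Fc) := by
  have hzU : PVar.z ∈ (tsLQParity N).U := by simp [tsLQParity]
  intro ⟨hpos, hneg⟩
  have hopp : L .z (!b) ∈ Ec ∪ Fc := by cases b <;> assumption
  rcases mem_union.mp hopp with h | h
  · exact hside _ h hzU (by simpa [Lit.negate, L] using hF) hx
  · exact hside _ hE hzU (by simpa [Lit.negate, L] using h) hx

theorem not_zTaut_of_step {prev : List (Clause PVar)} {C : Clause PVar}
    (hstep : LDQStep (tsLQParity N) (Dtrv (tsLQParity N)) prev C)
    (hprev : ∀ C' ∈ prev, ¬ IsTrigger α C' ∧ ZGuarded C') (hC : IsTrigger α C) :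
    ¬ ZTaut C := by
  rcases hstep with hax | ⟨w, hwU, -, hmem, -⟩ | ⟨x, Ec, Fc, hx, rfl, -, -, hE, hF, hside⟩
  · exact absurd hC.1 (not_chainFree_of_mem_tsMatrix hax)
  · have hwz := eq_z_of_mem_U hwU
    exact absurd ⟨hC.1.insert (by simp [hwz, PVar.isChain]), hC.2.insert_z hwz⟩
      (hprev _ hmem).1
  · have hxz := ne_z_of_mem_E hx
    cases hch : x.isChain
    · obtain ⟨P, hP, hFP, b, hsub⟩ := exists_falsified_premise hE hF hC.2
      exact absurd ⟨(hC.1.insert hch).mono hsub, hFP⟩ (hprev P hP).1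
    · have hguard :
          ∀ {Q : Clause PVar} {c : Bool}, insert ⟨x, c⟩ Q ∈ prev → L .z x.zSign ∈ Q :=
        fun hQ => mem_of_mem_insert_of_var_ne
          ((hprev _ hQ).2 _ (mem_insert_self _ _) hch) (Ne.symm hxz)
      exact not_zTaut_of_resolvent hside (dtrv_z_of_isChain hch) (hguard hE) (hguard hF)

theorem zLit_mem_of_step {prev : List (Clause PVar)} {C : Clause PVar}
    (hstep : LDQStep (tsLQParity N) (Dtrv (tsLQParity N)) prev C)
    (hvars : ∀ C' ∈ prev, ∀ l ∈ C', l.var ∈ (tsLQParity N).U ∪ (tsLQParity N).E)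
    (hprev : ∀ C' ∈ prev, ¬ IsTrigger α C' ∧ (FalsifiedOffZ α C' → ¬ ZTaut C' → zLit α N ∈ C'))
    (hF : FalsifiedOffZ α C) (hC : ¬ ZTaut C) : zLit α N ∈ C := by
  rcases hstep with hax | ⟨w, hwU, -, hmem, hred⟩ | ⟨x, Ec, Fc, hx, rfl, -, -, hE, hF', -⟩
  · exact zLit_mem_of_mem_tsMatrix hax hF
  · have hwz := eq_z_of_mem_U hwU
    have hfree :=
      chainFree_of_reduction hwU (fun l hl => hvars _ hmem l (mem_insert_of_mem hl)) hred
    exact absurd ⟨hfree.insert (by simp [hwz, PVar.isChain]), hF.insert_z hwz⟩ (hprev _ hmem).1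
  · have hxz := ne_z_of_mem_E hx
    obtain ⟨P, hP, hFP, b, hsub⟩ := exists_falsified_premise hE hF' hF
    have hz := (hprev P hP).2 hFP (not_zTaut_of_subset_insert hxz hsub hC)
    exact mem_of_mem_insert_of_var_ne (hsub hz) (by simpa [zLit, L] using hxz.symm)

theorem zLit_mem_of_first_trigger (hN : 2 ≤ N) {π as bs : List (Clause PVar)} {C : Clause PVar}
    (hπ : IsLDQProof (tsLQParity N) (Dtrv (tsLQParity N)) π) (hsplit : π = as ++ C :: bs)
    (has : ∀ C' ∈ as, ¬ IsTrigger α C') (hC : IsTrigger α C) :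
    ¬ ZTaut C ∧ zLit α N ∈ C := by
  have hvars := hπ.var_mem fun _ => var_mem_of_mem_tsMatrix hN
  have hguard := zGuarded_of_mem hN hπ
  have has_mem : ∀ C' ∈ as, C' ∈ π := fun C' h => by simp [hsplit, h]
  obtain ⟨has_proof, hstep⟩ := (hsplit ▸ hπ).of_append_cons
  have hnt := not_zTaut_of_step hstep (fun C' h => ⟨has C' h, hguard C' (has_mem C' h)⟩) hC
  have hbefore : ∀ C' ∈ as, FalsifiedOffZ α C' → ¬ ZTaut C' → zLit α N ∈ C' :=
    has_proof.forall_mem fun prev C' hsub hprev hstep' =>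
      zLit_mem_of_step hstep' (fun C'' h => hvars C'' (has_mem C'' (hsub h)))
        fun C'' h => ⟨has C'' (hsub h), hprev C'' h⟩
  exact ⟨hnt, zLit_mem_of_step hstep (fun C' h => hvars C' (has_mem C' h))
    (fun C' h => ⟨has C' h, hbefore C' h⟩) hC.2 hnt⟩

def xCube (C : Clause PVar) : Cube ℕ :=
  C.biUnion fun l => match l.var with
    | .x j => {(j, !l.pos)}
    | _ => ∅

theorem mem_xCube {C : Clause PVar} {j : ℕ} {b : Bool} :
    (j, b) ∈ xCube C ↔ L (.x j) (!b) ∈ C := by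
  simp only [xCube, mem_biUnion]
  constructor
  · rintro ⟨⟨v, c⟩, hl, hp⟩
    cases v <;> simp_all [L]
  · intro h
    exact ⟨_, h, by simp [L]⟩

theorem matches_xCube_iff {C : Clause PVar} (hC : ChainFree C)
    (hb : ∀ l ∈ C, l.var ≠ .b) : (xCube C).Matches α ↔ FalsifiedOffZ α C := by
  constructor
  · rintro hm ⟨v, c⟩ hl hvz
    cases v with
    | x j =>
      have := hm (j, !c) (mem_xCube.mpr (by simpa [L] using hl))
      simp_all [canonicalExt]
    | z => exact absurd rfl hvz
    | b => exact absurd rfl (hb _ hl)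
    | t _ | s _ => simpa [PVar.isChain] using hC _ hl
  · rintro hF ⟨j, b⟩ hp
    simpa [canonicalExt, L] using hF _ (mem_xCube.mp hp) (by simp [L])

/-- The strategy that answers `z := true` exactly when the first trigger contains `¬z`. -/
def toDecisionList (π : List (Clause PVar)) : DecisionList ℕ :=
  (π.filter fun C => decide (ChainFree C)).map fun C => (xCube C, decide (L .z false ∈ C))

theorem eval_toDecisionList (hN : 2 ≤ N) {π : List (Clause PVar)}
    (hπ : IsLDQRefutation (tsLQParity N) (Dtrv (tsLQParity N)) π) (α : ℕ → Bool) :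
    (toDecisionList π).eval α = some (prefixXor α N) := by
  have hvars := hπ.1.var_mem fun _ => var_mem_of_mem_tsMatrix hN
  have htrig : ∀ C ∈ π, ChainFree C ∧ (xCube C).Matches α ↔ IsTrigger α C := by
    intro C hC
    have hb : ∀ l ∈ C, l.var ≠ .b := fun l hl h => by
      simpa [h] using mem_vars_tsLQParity.mp (hvars C hC l hl)
    exact and_congr_right (matches_xCube_iff · hb)
  obtain ⟨C, hfind⟩ : ∃ C,
      π.find? (fun C => decide (ChainFree C ∧ (xCube C).Matches α)) = some C := by
    rw [← Option.isSome_iff_exists, List.find?_isSome]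
    exact ⟨∅, hπ.2, decide_eq_true
      ((htrig ∅ hπ.2).mpr ⟨by simp [ChainFree], by simp [FalsifiedOffZ]⟩)⟩
  obtain ⟨hCtrig, as, bs, hsplit, has⟩ := List.find?_eq_some_iff_append.mp hfind
  have hCmem : C ∈ π := by simp [hsplit]
  obtain ⟨hnt, hz⟩ := zLit_mem_of_first_trigger hN hπ.1 hsplit
    (fun C' h htr => by
      simpa [(htrig C' (by simp [hsplit, h])).mpr htr] using has C' h)
    ((htrig C hCmem).mp (of_decide_eq_true hCtrig))
  simp only [toDecisionList, DecisionList.eval, List.find?_map, List.find?_filter,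
    Function.comp_def, decide_eq_true_eq]
  rw [hfind]
  cases hp : prefixXor α N <;> simp_all [zLit, ZTaut]

theorem sixteen_pow_le_length (hN : 2 ≤ N) {π : List (Clause PVar)}
    (hπ : IsLDQRefutation (tsLQParity N) (Dtrv (tsLQParity N)) π) :
    16 ^ (N / 4) ≤ 15 ^ (N / 4) * (π.length + 1) := by
  have hvars := hπ.1.var_mem fun _ => var_mem_of_mem_tsMatrix hN
  have hcubes : ∀ e ∈ toDecisionList π, e.1.vars ⊆ Icc 1 N := by
    intro e he j hj
    obtain ⟨C, hC, rfl⟩ := List.mem_map.mp he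
    obtain ⟨⟨j', b⟩, hp, rfl⟩ := mem_image.mp hj
    simpa [L] using
      mem_vars_tsLQParity.mp (hvars C (List.mem_of_mem_filter hC) _ (mem_xCube.mp hp))
  have hsens : ∀ α, ∀ m ∈ Icc 1 N, prefixXor (flipAt m α) N ≠ prefixXor α N := fun α m hm => by
    rw [prefixXor_flipAt α (mem_Icc.mp hm).1 (mem_Icc.mp hm).2]
    exact Bool.not_ne_self _
  have hlen : (toDecisionList π).length ≤ π.length := by
    simpa [toDecisionList] using List.length_filter_le _ π
  have hbound := DecisionList.sixteen_pow_le_of_eval_eq hsens hcubes (eval_toDecisionList hN hπ)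
  rw [Nat.card_Icc, Nat.add_sub_cancel] at hbound
  exact hbound.trans (Nat.mul_le_mul_left _ (by omega))

end TsLQParity

theorem two_rpow_sqrt_le_of_sixteen_pow_le {N m : ℕ} (hm : 1 ≤ m)
    (h : 16 ^ (N / 4) ≤ 15 ^ (N / 4) * (m + 1)) :
    (2 : ℝ) ^ (-18 : ℝ) * 2 ^ ((N : ℝ) ^ (1 / 2 : ℝ)) ≤ m := by
  set q := N / 4
  have hbase : (2 : ℝ) ^ (1 / 16 : ℝ) ≤ 16 / 15 := by
    calc (2 : ℝ) ^ (1 / 16 : ℝ) = 2 ^ ((16 : ℕ)⁻¹ : ℝ) := by norm_num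
      _ ≤ ((16 / 15 : ℝ) ^ 16) ^ ((16 : ℕ)⁻¹ : ℝ) :=
          Real.rpow_le_rpow (by norm_num) (by norm_num) (by positivity)
      _ = 16 / 15 := Real.pow_rpow_inv_natCast (by norm_num) (by norm_num)
  have hq : (2 : ℝ) ^ ((q : ℝ) / 16) ≤ m + 1 :=
    calc (2 : ℝ) ^ ((q : ℝ) / 16) = ((2 : ℝ) ^ (1 / 16 : ℝ)) ^ q := by
          rw [← Real.rpow_natCast, ← Real.rpow_mul (by norm_num)]; ring_nf
      _ ≤ (16 / 15) ^ q := pow_le_pow_left₀ (by positivity) hbase q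
      _ ≤ m + 1 := by
          rw [div_pow, div_le_iff₀ (by positivity)]
          exact_mod_cast (mul_comm (15 ^ q) (m + 1)) ▸ h
  have hsqrt : (N : ℝ) ^ (1 / 2 : ℝ) ≤ q / 16 + 17 := by
    have hNq : (N : ℝ) ≤ 4 * q + 3 := by exact_mod_cast (by omega : N ≤ 4 * q + 3)
    rw [← Real.sqrt_eq_rpow]
    nlinarith [Real.sq_sqrt (Nat.cast_nonneg N : (0 : ℝ) ≤ N), Real.sqrt_nonneg N,
      sq_nonneg (Real.sqrt N - 32)]
  calc (2 : ℝ) ^ (-18 : ℝ) * 2 ^ ((N : ℝ) ^ (1 / 2 : ℝ))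
      ≤ 2 ^ (-18 : ℝ) * 2 ^ ((q : ℝ) / 16 + 17) := by gcongr; norm_num
    _ = 2 ^ ((q : ℝ) / 16) / 2 := by
        rw [← Real.rpow_add two_pos, show -18 + ((q : ℝ) / 16 + 17) = q / 16 - 1 by ring,
          Real.rpow_sub two_pos, Real.rpow_one]
    _ ≤ (m + 1) / 2 := by gcongr
    _ ≤ m := by linarith [(Nat.one_le_cast.mpr hm : (1 : ℝ) ≤ m)]

/-- Exponential LDQ-Res lower bound for ts-LQParity. There are
`c, ε > 0` such that every LDQ(D^trv)-Res refutation of ts-LQParity(N) has size at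
least `c · 2^(N^ε)`, for all `N ≥ 2`. -/
theorem ts_lqparity_ldq_lower_bound : ∃ c ε : ℝ, 0 < c ∧ 0 < ε ∧
    ∀ N : ℕ, 2 ≤ N → ∀ π : List (Clause PVar),
      IsLDQRefutation (tsLQParity N) (Dtrv (tsLQParity N)) π →
      c * (2 : ℝ) ^ ((N : ℝ) ^ ε) ≤ (π.length : ℝ) := by
  refine ⟨2 ^ (-18 : ℝ), 1 / 2, by positivity, by norm_num, fun N hN π hπ => ?_⟩
  exact two_rpow_sqrt_le_of_sixteen_pow_le (List.length_pos_of_mem hπ.2)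
    (TsLQParity.sixteen_pow_le_length hN hπ)
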